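/- Let G be a connected weighted graph with weights in (0,1) and let C* be an optimal k-clustering of G under the min-max quality measure Φ. Then for every cluster C ∈ C*, the maximum spanning tree of the subgraph induced by C is a subtree of some maximum spanning tree of G. -/

import Mathlib

open scoped Classical
noncomputable section

namespace Bal

variable {V : Type*}

/-- Total weight of the edges of a graph. -/
def totalWeight {α : Type*} [Fintype α] (H : SimpleGraph α) (w : Sym2 α → ℝ) : ℝ :=
  ∑ e : Sym2 α, if e ∈ H.edgeSet then w e else 0

/-- `T` is a maximum spanning tree of `G` w.r.t. the weight `w`. -/
def IsMaxSpanTree {α : Type*} [Fintype α] (G T : SimpleGraph α) (w : Sym2 α → ℝ) : Prop :=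
  T ≤ G ∧ T.IsTree ∧
    ∀ T' : SimpleGraph α, T' ≤ G → T'.IsTree → totalWeight T' w ≤ totalWeight T w

/-- Weight function on the induced subgraph on `C`. -/
def subWeight (w : Sym2 V → ℝ) (C : Set V) : Sym2 C → ℝ :=
  fun e => w (e.map Subtype.val)

/-- Edges of `G` with exactly one endpoint in `C`. -/
def outEdges (G : SimpleGraph V) (C : Set V) : Set (Sym2 V) :=
  {e | e ∈ G.edgeSet ∧ ∃ a b, e = s(a, b) ∧ a ∈ C ∧ b ∉ C}

/-- Edges of `G` with both endpoints in `C`. -/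
def inEdges (G : SimpleGraph V) (C : Set V) : Set (Sym2 V) :=
  {e | e ∈ G.edgeSet ∧ ∀ x ∈ e, x ∈ C}

/-- `max(Out(C))`, with the convention `sSup ∅ = 0`. -/
def maxOut (G : SimpleGraph V) (w : Sym2 V → ℝ) (C : Set V) : ℝ :=
  sSup (w '' outEdges G C)

/-- `min(E(C))`, with the convention that it is `1` for singletons. -/
def minIn (G : SimpleGraph V) (w : Sym2 V → ℝ) (C : Set V) : ℝ :=
  if C.Subsingleton then 1 else sInf (w '' inEdges G C)

/-- `min(MST(C))` : minimum weight of an edge of a maximum spanning tree of `G[C]`,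
with the convention that it is `1` for singletons. -/
def minMST [Fintype V] (G : SimpleGraph V) (w : Sym2 V → ℝ) (C : Set V) : ℝ :=
  if C.Subsingleton then 1
  else if h : ∃ T : SimpleGraph C, IsMaxSpanTree (G.induce C) T (subWeight w C) then
    sInf (subWeight w C '' h.choose.edgeSet)
  else 1

/-- Quality measure of a cluster in a graph: `max(Out(C)) / min(MST(C))`. -/
def phi [Fintype V] (G : SimpleGraph V) (w : Sym2 V → ℝ) (C : Set V) : ℝ :=
  maxOut G w C / minMST G w C

/-- Quality measure of a cluster in a tree: `max(Out(C)) / min(E(C))`. -/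
def phiT (G : SimpleGraph V) (w : Sym2 V → ℝ) (C : Set V) : ℝ :=
  maxOut G w C / minIn G w C

/-- `𝒞` is a partition of `U ⊆ V` into `G`-connected parts. -/
def IsPartitionOn (G : SimpleGraph V) (U : Set V) (𝒞 : Set (Set V)) : Prop :=
  (∀ C ∈ 𝒞, C.Nonempty ∧ C ⊆ U ∧ (G.induce C).Connected) ∧
  (∀ C ∈ 𝒞, ∀ C' ∈ 𝒞, C ≠ C' → Disjoint C C') ∧ ⋃₀ 𝒞 = U

/-- A `k`-clustering of a graph `G` on vertex set `V`. -/
def IsClustering (G : SimpleGraph V) (𝒞 : Set (Set V)) (k : ℕ) : Prop :=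
  IsPartitionOn G Set.univ 𝒞 ∧ 𝒞.ncard = k

/-- Evaluation of a clustering of a graph (min-max quality measure, MST-based). -/
def eval [Fintype V] (G : SimpleGraph V) (w : Sym2 V → ℝ) (𝒞 : Set (Set V)) : ℝ :=
  sSup (phi G w '' 𝒞)

/-- Evaluation of a clustering of a tree. -/
def evalT (G : SimpleGraph V) (w : Sym2 V → ℝ) (𝒞 : Set (Set V)) : ℝ :=
  sSup (phiT G w '' 𝒞)

/-- `𝒞` is an optimal `k`-clustering of `G`. -/
def IsOptimal [Fintype V] (G : SimpleGraph V) (w : Sym2 V → ℝ) (k : ℕ) (𝒞 : Set (Set V)) : Prop :=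
  IsClustering G 𝒞 k ∧ ∀ 𝒟, IsClustering G 𝒟 k → eval G w 𝒞 ≤ eval G w 𝒟

/-- All edge weights lie in the open interval `(0,1)`. -/
def weightsOK (G : SimpleGraph V) (w : Sym2 V → ℝ) : Prop :=
  ∀ e ∈ G.edgeSet, 0 < w e ∧ w e < 1

/-- The set of connected components (as vertex sets) of a graph. -/
def components (G : SimpleGraph V) : Set (Set V) :=
  {C | ∃ x : V, C = {y | G.Reachable x y}}

end Bal

/-!
Cutting the `k - 1` lightest edges of a maximum spanning tree `T` of `G` leaves `k` components;
an edge leaving one of them is, by the cycle property of `T`, at most as heavy as each of the cut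
edges, hence as every edge of `T` inside a component, and therefore (cut property) as every edge
of a maximum spanning tree of the component. This `k`-clustering has value at most `1`, so the
optimal one does too, and for its cluster `C` every edge leaving `C` is at most as heavy as every
edge of `T_C`.

Now take, among the maximum spanning trees of `G`, one sharing the most edges with `T_C`. If it
missed an edge `ab` of `T_C`, its path from `a` to `b` would leave the side of `a` in `T_C - ab`
through an edge `g`: either `g` leaves `C`, or it joins the two sides of `T_C - ab` inside `C`;
in both cases `w g ≤ w ab` and `g ∉ T_C`, so exchanging `g` for `ab` gives a maximum spanning tree
sharing more edges with `T_C`.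
-/

theorem Finset.exists_subset_card_eq_forall_le {β : Type*} [DecidableEq β] (s : Finset β)
    (w : β → ℝ) {m : ℕ} (hm : m ≤ s.card) :
    ∃ R ⊆ s, R.card = m ∧ ∀ e ∈ R, ∀ f ∈ s \ R, w e ≤ w f := by
  obtain ⟨R, hR, hmin⟩ := (s.powersetCard m).exists_min_image (∑ e ∈ ·, w e)
    (Finset.powersetCard_nonempty.mpr hm)
  rw [Finset.mem_powersetCard] at hR
  refine ⟨R, hR.1, hR.2, fun e he f hf => ?_⟩
  rw [Finset.mem_sdiff] at hf
  have hfe : f ∉ R.erase e := fun h => hf.2 (Finset.mem_of_mem_erase h)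
  have hswap := hmin (insert f (R.erase e)) <| Finset.mem_powersetCard.mpr
    ⟨Finset.insert_subset hf.1 ((Finset.erase_subset _ _).trans hR.1), by
      rw [Finset.card_insert_of_notMem hfe, Finset.card_erase_of_mem he, ← hR.2]
      have := Finset.card_pos.mpr ⟨e, he⟩
      omega⟩
  rw [Finset.sum_insert hfe, Finset.sum_erase_eq_sub he] at hswap
  linarith

namespace SimpleGraph

variable {V : Type*} {H : SimpleGraph V} {a b x y : V}

lemma reachable_deleteEdges_or {z : V} (h : H.Reachable a z) :
    (H.deleteEdges {s(a, b)}).Reachable a z ∨ (H.deleteEdges {s(a, b)}).Reachable b z := by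
  rw [reachable_iff_reflTransGen] at h
  induction h with
  | refl => exact Or.inl .rfl
  | @tail u v _ huv ih =>
    by_cases he : s(u, v) = s(a, b)
    · rcases Sym2.eq_iff.mp he with ⟨-, rfl⟩ | ⟨-, rfl⟩
      · exact Or.inr .rfl
      · exact Or.inl .rfl
    · have huv' : (H.deleteEdges {s(a, b)}).Adj u v := by simp [huv, he]
      exact ih.imp (·.trans huv'.reachable) (·.trans huv'.reachable)

lemma reachable_deleteEdges_of_not_reachable {z : V} (ha : ¬ H.Reachable x a)
    (h : H.Reachable x z) : (H.deleteEdges {s(a, b)}).Reachable x z := by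
  obtain ⟨p⟩ := h
  exact reachable_deleteEdges_iff_exists_walk.mpr
    ⟨p, fun he => ha ⟨p.takeUntil a (p.fst_mem_support_of_mem_edges he)⟩⟩

lemma IsAcyclic.not_reachable_deleteEdges_of_mem_darts (hH : H.IsAcyclic) {p : H.Walk a b}
    (hp : p.IsPath) {d : H.Dart} (hd : d ∈ p.darts) :
    ¬ (H.deleteEdges {d.edge}).Reachable a b := by
  rw [show d.edge = s(d.fst, d.snd) from rfl, reachable_deleteEdges_iff_exists_walk]
  rintro ⟨q, hq⟩
  have hqp : q.toPath = ⟨p, hp⟩ := (hH.subsingleton_path a b).elim _ _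
  apply hq (q.edges_toPath_subset_edges _)
  rw [hqp]
  exact List.mem_map_of_mem hd

lemma IsTree.sup_edge_deleteEdges (hH : H.IsTree)
    (hsep : ¬ (H.deleteEdges {s(x, y)}).Reachable a b) :
    (H.deleteEdges {s(x, y)} ⊔ edge a b).IsTree := by
  set D := H.deleteEdges {s(x, y)}
  have hle : D ≤ D ⊔ edge a b := le_sup_left
  have hab : (D ⊔ edge a b).Adj a b := by
    simp [edge_adj, show a ≠ b by rintro rfl; exact hsep .rfl]
  have hside : ∀ z, D.Reachable x z ∨ D.Reachable y z := fun z =>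
    reachable_deleteEdges_or (hH.connected.preconnected x z)
  have hxy' : (D ⊔ edge a b).Reachable x y := by
    rcases hside a with ha | ha <;> rcases hside b with hb | hb
    · exact absurd (ha.symm.trans hb) hsep
    · exact (ha.mono hle).trans (hab.reachable.trans (hb.mono hle).symm)
    · exact (hb.mono hle).trans (hab.symm.reachable.trans (ha.mono hle).symm)
    · exact absurd (ha.symm.trans hb) hsep
  refine ⟨(connected_iff_exists_forall_reachable _).mpr ⟨x, fun z => ?_⟩,
    (hH.isAcyclic.anti (deleteEdges_le _)).sup_edge_of_not_reachable hsep⟩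
  exact (hside z).elim (·.mono hle) (hxy'.trans <| ·.mono hle)

lemma card_connectedComponent_deleteEdges_of_isBridge [Finite V] (hab : H.Adj a b)
    (hbr : H.IsBridge s(a, b)) :
    Nat.card (H.deleteEdges {s(a, b)}).ConnectedComponent = Nat.card H.ConnectedComponent + 1 := by
  set D := H.deleteEdges {s(a, b)}
  set φ : D.ConnectedComponent → H.ConnectedComponent :=
    ConnectedComponent.map (.ofLE (deleteEdges_le _))
  have hbr' : ¬ D.Reachable a b := hbr
  have hbij : Function.Bijective fun c : ({D.connectedComponentMk b}ᶜ : Set _) => φ c := by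
    constructor
    · rintro ⟨c₁, hc₁⟩ ⟨c₂, hc₂⟩ h
      induction c₁ using ConnectedComponent.ind with | _ x => ?_
      induction c₂ using ConnectedComponent.ind with | _ y => ?_
      have hxy : H.Reachable x y := ConnectedComponent.exact h
      have hside : ∀ z, H.Reachable a z → D.connectedComponentMk z ≠ D.connectedComponentMk b →
          D.Reachable a z := fun z haz hz =>
        (reachable_deleteEdges_or haz).resolve_right fun h => hz (ConnectedComponent.sound h.symm)
      refine Subtype.ext (ConnectedComponent.sound ?_)
      by_cases hax : H.Reachable a x
      · exact (hside x hax hc₁).symm.trans (hside y (hax.trans hxy) hc₂)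
      · exact reachable_deleteEdges_of_not_reachable (fun h => hax h.symm) hxy
    · intro c
      induction c using ConnectedComponent.ind with | _ x => ?_
      by_cases hbx : D.Reachable b x
      · refine ⟨⟨D.connectedComponentMk a, fun h => hbr' (ConnectedComponent.exact h)⟩, ?_⟩
        exact ConnectedComponent.sound (hab.reachable.trans (hbx.mono (deleteEdges_le _)))
      · exact ⟨⟨D.connectedComponentMk x, fun h => hbx (ConnectedComponent.exact h).symm⟩, rfl⟩
  rw [← Nat.card_congr (Equiv.ofBijective _ hbij), Nat.card_coe_set_eq,
    ← Set.ncard_add_ncard_compl {D.connectedComponentMk b}, Set.ncard_singleton, add_comm]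

lemma IsAcyclic.card_connectedComponent_deleteEdges [Finite V] (hH : H.IsAcyclic)
    (R : Finset (Sym2 V)) (hR : ↑R ⊆ H.edgeSet) :
    Nat.card (H.deleteEdges ↑R).ConnectedComponent = Nat.card H.ConnectedComponent + R.card := by
  induction R using Finset.induction_on with
  | empty => simp
  | @insert e R he ih =>
    have heH : e ∈ (H.deleteEdges ↑R).edgeSet := by
      rw [edgeSet_deleteEdges]
      exact ⟨hR (by simp), he⟩
    rw [Finset.coe_insert, Set.insert_eq, Set.union_comm, ← deleteEdges_deleteEdges,
      Finset.card_insert_of_notMem he, ← add_assoc,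
      ← ih ((Finset.coe_subset.mpr (Finset.subset_insert _ _)).trans hR)]
    induction e using Sym2.ind with | _ u v => ?_
    exact card_connectedComponent_deleteEdges_of_isBridge heH
      (isAcyclic_iff_forall_isBridge.mp (hH.anti (deleteEdges_le _)) heH)

lemma IsTree.card_connectedComponent_deleteEdges [Finite V] (hH : H.IsTree)
    (R : Finset (Sym2 V)) (hR : ↑R ⊆ H.edgeSet) :
    Nat.card (H.deleteEdges ↑R).ConnectedComponent = R.card + 1 := by
  have := hH.connected.nonempty
  have := hH.connected.preconnected.subsingleton_connectedComponent
  rw [hH.isAcyclic.card_connectedComponent_deleteEdges R hR, Nat.card_unique, add_comm]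

end SimpleGraph

namespace Bal

open SimpleGraph

variable {V : Type*}

section MaxSpanTree

variable [Fintype V] {G T : SimpleGraph V} {w : Sym2 V → ℝ} {a b x y : V}

lemma IsMaxSpanTree.le (hT : IsMaxSpanTree G T w) : T ≤ G := hT.1

lemma IsMaxSpanTree.isTree (hT : IsMaxSpanTree G T w) : T.IsTree := hT.2.1

lemma IsMaxSpanTree.totalWeight_le (hT : IsMaxSpanTree G T w) {T' : SimpleGraph V}
    (hT'G : T' ≤ G) (hT' : T'.IsTree) : totalWeight T' w ≤ totalWeight T w :=
  hT.2.2 T' hT'G hT'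

lemma totalWeight_sup_edge_deleteEdges (w : Sym2 V → ℝ) (hxy : T.Adj x y) (hab : a ≠ b)
    (hnab : ¬ T.Adj a b) :
    totalWeight (T.deleteEdges {s(x, y)} ⊔ edge a b) w =
      totalWeight T w - w s(x, y) + w s(a, b) := by
  unfold totalWeight
  trans ∑ e, ((if e ∈ T.edgeSet then w e else 0) - (if e = s(x, y) then w e else 0) +
    (if e = s(a, b) then w e else 0))
  · refine Finset.sum_congr rfl fun e _ => ?_
    have hxy' : s(x, y) ∈ T.edgeSet := hxy
    have hab' : s(a, b) ∉ T.edgeSet := hnab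
    split_ifs <;> grind [edgeSet_edge_of_ne, edgeSet_sup, edgeSet_deleteEdges]
  · simp [Finset.sum_add_distrib, Finset.sum_sub_distrib]

lemma exists_isMaxSpanTree (hG : G.Connected) (w : Sym2 V → ℝ) : ∃ T, IsMaxSpanTree G T w := by
  obtain ⟨T₀, hT₀G, hT₀⟩ := hG.exists_isTree_le
  obtain ⟨T, ⟨hTG, hT⟩, hmax⟩ := Set.exists_max_image {T | T ≤ G ∧ T.IsTree}
    (totalWeight · w) (Set.toFinite _) ⟨T₀, hT₀G, hT₀⟩
  exact ⟨T, hTG, hT, fun T' h₁ h₂ => hmax T' ⟨h₁, h₂⟩⟩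

lemma exists_isMaxSpanTree_forall_le (hG : G.Connected) (w : Sym2 V → ℝ)
    (f : SimpleGraph V → ℕ) :
    ∃ T, IsMaxSpanTree G T w ∧ ∀ T', IsMaxSpanTree G T' w → f T' ≤ f T :=
  Set.exists_max_image {T | IsMaxSpanTree G T w} f (Set.toFinite _) (exists_isMaxSpanTree hG w)

lemma IsMaxSpanTree.exchange (hT : IsMaxSpanTree G T w) (hxy : T.Adj x y) (hab : G.Adj a b)
    (hnab : ¬ T.Adj a b) (hsep : ¬ (T.deleteEdges {s(x, y)}).Reachable a b) :
    T.deleteEdges {s(x, y)} ⊔ edge a b ≤ G ∧ (T.deleteEdges {s(x, y)} ⊔ edge a b).IsTree ∧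
      totalWeight (T.deleteEdges {s(x, y)} ⊔ edge a b) w =
        totalWeight T w - w s(x, y) + w s(a, b) :=
  ⟨sup_le ((deleteEdges_le _).trans hT.le) ((edge_le_iff _).mpr (Or.inr hab)),
    hT.isTree.sup_edge_deleteEdges hsep, totalWeight_sup_edge_deleteEdges w hxy hab.ne hnab⟩

lemma IsMaxSpanTree.weight_le_of_not_reachable (hT : IsMaxSpanTree G T w) (hxy : T.Adj x y)
    (hab : G.Adj a b) (hsep : ¬ (T.deleteEdges {s(x, y)}).Reachable a b) :
    w s(a, b) ≤ w s(x, y) := by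
  by_cases hTab : T.Adj a b
  · have : s(a, b) = s(x, y) := by
      by_contra hne
      exact hsep (Adj.reachable (by simp [hTab, hne]))
    rw [this]
  · obtain ⟨hle, htree, hweight⟩ := hT.exchange hxy hab hTab hsep
    have := hT.totalWeight_le hle htree
    linarith

lemma IsMaxSpanTree.weight_le_of_mem_darts (hT : IsMaxSpanTree G T w) (hab : G.Adj a b)
    {p : T.Walk a b} (hp : p.IsPath) {d : T.Dart} (hd : d ∈ p.darts) : w s(a, b) ≤ w d.edge :=
  hT.weight_le_of_not_reachable d.adj hab
    (hT.isTree.isAcyclic.not_reachable_deleteEdges_of_mem_darts hp hd)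

lemma IsMaxSpanTree.exists_adj_weight_le {K : SimpleGraph V} (hT : IsMaxSpanTree G T w)
    (hKG : K ≤ G) (hK : K.Connected) (hxy : T.Adj x y) :
    ∃ u v, K.Adj u v ∧ w s(u, v) ≤ w s(x, y) := by
  have hy : ¬ (T.deleteEdges {s(x, y)}).Reachable x y :=
    isAcyclic_iff_forall_adj_isBridge.mp hT.isTree.isAcyclic hxy
  obtain ⟨d, -, hd₁, hd₂⟩ := (hK.preconnected x y).some.exists_boundary_dart
    {z | (T.deleteEdges {s(x, y)}).Reachable x z} .rfl hy
  exact ⟨d.fst, d.snd, d.adj,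
    hT.weight_le_of_not_reachable hxy (hKG d.adj) fun h => hd₂ (hd₁.trans h)⟩

end MaxSpanTree

lemma maxOut_le_one {G : SimpleGraph V} {w : Sym2 V → ℝ} (hw : weightsOK G w) (C : Set V) :
    maxOut G w C ≤ 1 :=
  Real.sSup_le (fun _ ⟨e, he, hwe⟩ => hwe ▸ (hw e he.1).2.le) zero_le_one

lemma edgeSet_nonempty_of_not_subsingleton {C : Set V} {T : SimpleGraph C} (hT : T.Connected)
    (hC : ¬ C.Subsingleton) : T.edgeSet.Nonempty := by
  have : Nontrivial C := Set.nontrivial_coe_sort.mpr (Set.not_subsingleton_iff.mp hC)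
  exact edgeSet_nonempty.mpr fun h => not_connected_bot (h ▸ hT)

lemma isClustering_range_supp {G F : SimpleGraph V} (hFG : F ≤ G) :
    IsClustering G (Set.range (ConnectedComponent.supp : F.ConnectedComponent → Set V))
      (Nat.card F.ConnectedComponent) := by
  refine ⟨⟨?_, ?_, by rw [Set.sUnion_range]; exact iUnion_connectedComponentSupp F⟩,
    Set.ncard_range_of_injective ConnectedComponent.supp_injective⟩
  · rintro _ ⟨c, rfl⟩
    exact ⟨c.nonempty_supp, Set.subset_univ _, c.connected_toSimpleGraph.mono fun _ _ h => hFG h⟩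
  · rintro _ ⟨c, rfl⟩ _ ⟨c', rfl⟩ hne
    exact pairwise_disjoint_supp_connectedComponent F fun h => hne (h ▸ rfl)

section Clustering

variable [Fintype V] {G : SimpleGraph V} {w : Sym2 V → ℝ} {C : Set V}

lemma minMST_eq_sInf (hC : ¬ C.Subsingleton)
    (hex : ∃ T : SimpleGraph C, IsMaxSpanTree (G.induce C) T (subWeight w C)) :
    ∃ T₀ : SimpleGraph C, IsMaxSpanTree (G.induce C) T₀ (subWeight w C) ∧
      minMST G w C = sInf (subWeight w C '' T₀.edgeSet) :=
  ⟨hex.choose, hex.choose_spec, by rw [minMST, if_neg hC, dif_pos hex]⟩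

/-- `minMST` is read off an arbitrarily chosen maximum spanning tree `T₀` of `G[C]`; the cut
property of `T` against the connected graph `T₀` makes the choice harmless. -/
lemma minMST_le {T : SimpleGraph C} (hT : IsMaxSpanTree (G.induce C) T (subWeight w C))
    {a b : C} (hab : T.Adj a b) : minMST G w C ≤ w s(↑a, ↑b) := by
  have hC : ¬ C.Subsingleton := fun h => hab.ne (Subtype.ext (h a.2 b.2))
  obtain ⟨T₀, hT₀, heq⟩ := minMST_eq_sInf hC ⟨T, hT⟩
  obtain ⟨u, v, huv, hle⟩ := hT.exists_adj_weight_le hT₀.le hT₀.isTree.connected hab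
  rw [heq]
  exact (csInf_le (Set.toFinite _).bddBelow
    (Set.mem_image_of_mem _ (show s(u, v) ∈ T₀.edgeSet from huv))).trans hle

lemma le_minMST {K : SimpleGraph C} (hC : ¬ C.Subsingleton) (hKG : K ≤ G.induce C)
    (hK : K.Connected) {r : ℝ} (hr : ∀ a b : C, K.Adj a b → r ≤ w s(↑a, ↑b)) :
    r ≤ minMST G w C := by
  obtain ⟨T₀, hT₀, heq⟩ := minMST_eq_sInf hC
    (exists_isMaxSpanTree (hK.mono hKG) (subWeight w C))
  rw [heq]
  refine le_csInf ((edgeSet_nonempty_of_not_subsingleton hT₀.isTree.connected hC).image _) ?_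
  rintro _ ⟨e, he, rfl⟩
  induction e using Sym2.ind with | _ a b => ?_
  obtain ⟨u, v, huv, hle⟩ := hT₀.exists_adj_weight_le hKG hK he
  exact (hr u v huv).trans hle

lemma minMST_pos (hw : weightsOK G w) {T : SimpleGraph C}
    (hT : IsMaxSpanTree (G.induce C) T (subWeight w C)) (hC : ¬ C.Subsingleton) :
    0 < minMST G w C := by
  obtain ⟨T₀, hT₀, heq⟩ := minMST_eq_sInf hC ⟨T, hT⟩
  rw [heq, Set.Finite.lt_csInf_iff (Set.toFinite _)
    ((edgeSet_nonempty_of_not_subsingleton hT₀.isTree.connected hC).image _)]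
  rintro _ ⟨e, he, rfl⟩
  induction e using Sym2.ind with | _ a b => exact (hw _ (hT₀.le he)).1

lemma phi_le_one (hw : weightsOK G w) {K : SimpleGraph C} (hKG : K ≤ G.induce C)
    (hK : K.Connected) (hout : ∀ e ∈ outEdges G C, ∀ a b : C, K.Adj a b → w e ≤ w s(↑a, ↑b)) :
    phi G w C ≤ 1 := by
  by_cases hC : C.Subsingleton
  · rw [phi, minMST, if_pos hC, div_one]
    exact maxOut_le_one hw C
  · have h0 : 0 ≤ minMST G w C := le_minMST hC hKG hK fun a b hab => (hw _ (hKG hab)).1.le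
    refine div_le_one_of_le₀ (Real.sSup_le ?_ h0) h0
    rintro _ ⟨e, he, rfl⟩
    exact le_minMST hC hKG hK (hout e he)

lemma weight_le_of_phi_le_one (hw : weightsOK G w) {T : SimpleGraph C}
    (hT : IsMaxSpanTree (G.induce C) T (subWeight w C)) (hphi : phi G w C ≤ 1)
    {e : Sym2 V} (he : e ∈ outEdges G C) {a b : C} (hab : T.Adj a b) : w e ≤ w s(↑a, ↑b) :=
  calc w e ≤ maxOut G w C := le_csSup (Set.toFinite _).bddAbove ⟨e, he, rfl⟩
    _ ≤ minMST G w C :=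
      (div_le_one (minMST_pos hw hT fun h => hab.ne (Subtype.ext (h a.2 b.2)))).mp hphi
    _ ≤ w s(↑a, ↑b) := minMST_le hT hab

lemma IsClustering.le_card [Nonempty V] {𝒞 : Set (Set V)} {k : ℕ} (h : IsClustering G 𝒞 k) :
    k ≤ Fintype.card V := by
  obtain ⟨⟨hparts, hdisj, -⟩, rfl⟩ := h
  rw [← Nat.card_eq_fintype_card, ← Set.ncard_univ]
  refine Set.ncard_le_ncard_of_injOn (fun D => Classical.epsilon (· ∈ D))
    (fun _ _ => Set.mem_univ _) fun D hD D' hD' heq => ?_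
  by_contra hne
  refine Set.disjoint_left.mp (hdisj D hD D' hD' hne)
    (Classical.epsilon_spec (hparts D hD).1) ?_
  rw [show Classical.epsilon (· ∈ D) = Classical.epsilon (· ∈ D') from heq]
  exact Classical.epsilon_spec (hparts D' hD').1

lemma IsMaxSpanTree.weight_outEdges_le {T : SimpleGraph V} (hT : IsMaxSpanTree G T w)
    {R : Finset (Sym2 V)} (hR : ∀ e ∈ R, ∀ f ∈ T.edgeFinset \ R, w e ≤ w f)
    (c : (T.deleteEdges ↑R).ConnectedComponent) {e : Sym2 V} (he : e ∈ outEdges G c.supp)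
    {a b : V} (hab : (T.deleteEdges ↑R).Adj a b) : w e ≤ w s(a, b) := by
  obtain ⟨heG, u, v, rfl, hu, hv⟩ := he
  obtain ⟨d, hd, hd₁, hd₂⟩ :=
    (hT.isTree.connected.preconnected u v).some.toPath.1.exists_boundary_dart _ hu hv
  have hdR : d.edge ∈ R := by
    by_contra hdR
    have hadj : (T.deleteEdges ↑R).Adj d.fst d.snd := by
      rw [deleteEdges_adj]
      exact ⟨d.adj, hdR⟩
    exact hd₂ ((c.mem_supp_iff _).mp hd₁ ▸
      (ConnectedComponent.connectedComponentMk_eq_of_adj hadj).symm)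
  calc w s(u, v) ≤ w d.edge := hT.weight_le_of_mem_darts heG (Walk.toPath _).2 hd
    _ ≤ w s(a, b) := hR _ hdR _ (by simpa using hab)

theorem exists_isClustering_eval_le_one (hG : G.Connected) (hw : weightsOK G w) {k : ℕ}
    (hk₁ : 1 ≤ k) (hk : k ≤ Fintype.card V) : ∃ 𝒟, IsClustering G 𝒟 k ∧ eval G w 𝒟 ≤ 1 := by
  obtain ⟨T, hT⟩ := exists_isMaxSpanTree hG w
  obtain ⟨R, hRT, hRcard, hR⟩ := T.edgeFinset.exists_subset_card_eq_forall_le w (m := k - 1)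
    (by have := hT.isTree.card_edgeFinset; omega)
  have hcard : Nat.card (T.deleteEdges ↑R).ConnectedComponent = k := by
    rw [hT.isTree.card_connectedComponent_deleteEdges R fun e he => mem_edgeFinset.mp (hRT he), hRcard]
    omega
  refine ⟨_, hcard ▸ isClustering_range_supp ((deleteEdges_le _).trans hT.le),
    Real.sSup_le ?_ zero_le_one⟩
  rintro _ ⟨_, ⟨c, rfl⟩, rfl⟩
  exact phi_le_one hw (K := (T.deleteEdges ↑R).induce c.supp) (fun _ _ h => hT.le h.1)
    c.connected_toSimpleGraph fun e he a b hab => hT.weight_outEdges_le hR c he hab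

lemma exists_exchange_edge {T : SimpleGraph V} (hT : T.IsTree) (hTG : T ≤ G)
    {T_C : SimpleGraph C} (hTC : IsMaxSpanTree (G.induce C) T_C (subWeight w C))
    (hout : ∀ e ∈ outEdges G C, ∀ a b : C, T_C.Adj a b → w e ≤ w s(↑a, ↑b))
    {a b : C} (hab : T_C.Adj a b) (hnab : ¬ T.Adj a b) :
    ∃ x y, T.Adj x y ∧ ¬ (T.deleteEdges {s(x, y)}).Reachable a b ∧ w s(x, y) ≤ w s(↑a, ↑b) ∧
      s(x, y) ∉ Sym2.map Subtype.val '' T_C.edgeSet := by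
  set A : Set V := Subtype.val '' {z | (T_C.deleteEdges {s(a, b)}).Reachable a z}
  have hbA : ↑b ∉ A := by
    rintro ⟨z, hz, hzb⟩
    exact isAcyclic_iff_forall_adj_isBridge.mp hTC.isTree.isAcyclic hab
      (Subtype.val_injective hzb ▸ hz)
  set p := (hT.connected.preconnected a b).some.toPath
  obtain ⟨⟨⟨_, v⟩, hxv⟩, hd, ⟨x, hx, rfl⟩, hv⟩ := p.1.exists_boundary_dart A ⟨a, .rfl, rfl⟩ hbA
  refine ⟨x, v, hxv, hT.isAcyclic.not_reachable_deleteEdges_of_mem_darts p.2 hd, ?_⟩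
  by_cases hvC : v ∈ C
  · set y : C := ⟨v, hvC⟩
    have hxy : ¬ (T_C.deleteEdges {s(a, b)}).Reachable x y := fun h => hv ⟨y, hx.trans h, rfl⟩
    have hGxy : (G.induce C).Adj x y := hTG hxv
    refine ⟨hTC.weight_le_of_not_reachable hab hGxy hxy, ?_⟩
    rintro ⟨e, he, heq⟩
    rw [show e = s(x, y) from Sym2.map.injective Subtype.val_injective (by rw [heq]; rfl)] at he
    have hne : s(x, y) ≠ s(a, b) := fun h => hnab <| by
      have h' : s((x : V), v) = s((a : V), (b : V)) := congrArg (Sym2.map Subtype.val) h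
      rw [← mem_edgeSet, ← h']
      exact hxv
    exact hxy (Adj.reachable (by rw [deleteEdges_adj]; exact ⟨he, hne⟩))
  · refine ⟨hout _ ⟨hTG hxv, x, v, rfl, x.2, hvC⟩ a b hab, ?_⟩
    rintro ⟨e, -, heq⟩
    obtain ⟨z, -, hz⟩ := Sym2.mem_map.mp (heq ▸ Sym2.mem_mk_right _ _ : v ∈ Sym2.map _ e)
    exact hvC (hz ▸ z.2)

theorem IsMaxSpanTree.exists_isMaxSpanTree_of_forall_outEdges_le {T_C : SimpleGraph C}
    (hTC : IsMaxSpanTree (G.induce C) T_C (subWeight w C)) (hG : G.Connected)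
    (hout : ∀ e ∈ outEdges G C, ∀ a b : C, T_C.Adj a b → w e ≤ w s(↑a, ↑b)) :
    ∃ T, IsMaxSpanTree G T w ∧ ∀ a b : C, T_C.Adj a b → T.Adj a b := by
  set M := Sym2.map Subtype.val '' T_C.edgeSet
  obtain ⟨T, hT, hmax⟩ := exists_isMaxSpanTree_forall_le hG w fun T => (T.edgeSet ∩ M).ncard
  refine ⟨T, hT, fun a b hab => ?_⟩
  by_contra hnab
  have hGab : G.Adj a b := hTC.le hab
  obtain ⟨x, y, hxy, hsep, hle, hM⟩ := exists_exchange_edge hT.isTree hT.le hTC hout hab hnab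
  obtain ⟨hT'G, hT'tree, hT'w⟩ := hT.exchange hxy hGab hnab hsep
  have hT' : IsMaxSpanTree G (T.deleteEdges {s(x, y)} ⊔ edge a b) w :=
    ⟨hT'G, hT'tree, fun T'' h₁ h₂ => (hT.totalWeight_le h₁ h₂).trans (by linarith)⟩
  have hfM : s((a : V), (b : V)) ∈ M := ⟨s(a, b), hab, rfl⟩
  have hsub : T.edgeSet ∩ M ⊂ (T.deleteEdges {s(x, y)} ⊔ edge a b).edgeSet ∩ M := by
    rw [edgeSet_sup, edgeSet_deleteEdges, edgeSet_edge_of_ne hGab.ne]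
    refine (Set.ssubset_iff_of_subset ?_).mpr ⟨_, ⟨Or.inr rfl, hfM⟩, fun h => hnab h.1⟩
    rintro e ⟨heT, heM⟩
    exact ⟨Or.inl ⟨heT, fun h => hM (h ▸ heM)⟩, heM⟩
  exact (hmax _ hT').not_gt (Set.ncard_lt_ncard hsub)

end Clustering

/-- the maximum spanning tree of an optimal cluster is a subtree of some
maximum spanning tree of `G`. -/
theorem statement2 {V : Type*} [Fintype V] (G : SimpleGraph V) (w : Sym2 V → ℝ)
    (hconn : G.Connected) (hw : weightsOK G w) (k : ℕ) (𝒞 : Set (Set V))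
    (hopt : IsOptimal G w k 𝒞) (C : Set V) (hC : C ∈ 𝒞)
    (T_C : SimpleGraph C) (hTC : IsMaxSpanTree (G.induce C) T_C (subWeight w C)) :
    ∃ T : SimpleGraph V, IsMaxSpanTree G T w ∧
      ∀ a b : C, T_C.Adj a b → T.Adj (a : V) (b : V) := by
  obtain ⟨hclust, hmin⟩ := hopt
  have := hconn.nonempty
  have hk : 1 ≤ k := hclust.2 ▸ (Set.ncard_pos (Set.toFinite 𝒞)).mpr ⟨C, hC⟩
  obtain ⟨𝒟, h𝒟, h𝒟_eval⟩ := exists_isClustering_eval_le_one hconn hw hk hclust.le_card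
  have hphi : phi G w C ≤ 1 := calc
    phi G w C ≤ eval G w 𝒞 := le_csSup (Set.toFinite _).bddAbove (Set.mem_image_of_mem _ hC)
    _ ≤ eval G w 𝒟 := hmin 𝒟 h𝒟
    _ ≤ 1 := h𝒟_eval
  exact hTC.exists_isMaxSpanTree_of_forall_outEdges_le hconn
    fun _ he _ _ hab => weight_le_of_phi_le_one hw hTC hphi he hab

end Bal
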